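/- arXiv:1502.01604 — 5 statements merged into one kernel-verified Lean document; each statement's English description precedes it below -/
import Mathlib

section
/- Let O be a complete discrete valuation ring with uniformizer ϖ and let r ≥ 1. Suppose f(u) = u^p + a_{p-1}u^{p-1} + ... + a_1 u ∈ O[u] satisfies a_i ≡ 0 mod ϖ for 1 ≤ i ≤ p-1 and ϖ^(r+1) divides a_1. Then for every n ≥ 1 there exist polynomials h_0^(n), ..., h_n^(n) ∈ O[u] such that f^(n)(u) = Σ_{i=0}^{n} h_{n-i}^(n)(u) · u^(2^(n-i)) · ϖ^((r+1)i), where f^(n) denotes the n-fold composite of f. -/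
open Polynomial Finset

section Aux

variable {O : Type*} [CommRing O] (ϖ : O) (r : ℕ)

/-- The generators `X^(2^(n-i)) * ϖ^((r+1)i)`. -/
noncomputable def genPoly (n i : ℕ) : Polynomial O :=
  X ^ (2 ^ (n - i)) * C (ϖ ^ ((r + 1) * i))

/-- The ideal generated by the `genPoly n i`, `0 ≤ i ≤ n`. -/
noncomputable def genIdeal (n : ℕ) : Ideal (Polynomial O) :=
  Ideal.span (Set.range fun i : Fin (n + 1) => genPoly ϖ r n i)

lemma genPoly_mem {n i : ℕ} (hi : i ≤ n) : genPoly ϖ r n i ∈ genIdeal ϖ r n :=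
  Ideal.subset_span ⟨⟨i, by omega⟩, rfl⟩

lemma key_exp {n i i' : ℕ} (hi : i ≤ n) (h1 : 1 ≤ i') :
    2 ^ (n + 1 - min (i + i') (n + 1)) ≤ 2 ^ (n - i) :=
  Nat.pow_le_pow_right (by norm_num) (by omega)

lemma gen_mul_mem {n i i' : ℕ} (hi : i ≤ n) (hi' : i' ≤ n) :
    genPoly ϖ r n i * genPoly ϖ r n i' ∈ genIdeal ϖ r (n + 1) := by
  set s := min (i + i') (n + 1) with hs
  have hsle : s ≤ n + 1 := min_le_right _ _
  have hϖ : s ≤ i + i' := min_le_left _ _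
  have hexp : 2 ^ (n + 1 - s) ≤ 2 ^ (n - i) + 2 ^ (n - i') := by
    rcases Nat.eq_zero_or_pos i' with h | h
    · rcases Nat.eq_zero_or_pos i with h0 | h0
      · have hs0 : s = 0 := by omega
        rw [hs0, h, h0]
        simp only [Nat.sub_zero]
        rw [pow_succ]
        omega
      · have hk := key_exp (n := n) (i := i') (i' := i) hi' h0
        rw [Nat.add_comm i' i] at hk
        exact le_trans hk (Nat.le_add_left _ _)
    · exact le_trans (key_exp hi h) (Nat.le_add_right _ _)
  have hmul : (r + 1) * s ≤ (r + 1) * (i + i') := Nat.mul_le_mul_left _ hϖ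
  have key : genPoly ϖ r n i * genPoly ϖ r n i' =
      (X ^ (2 ^ (n - i) + 2 ^ (n - i') - 2 ^ (n + 1 - s)) *
        C (ϖ ^ ((r + 1) * (i + i') - (r + 1) * s))) * genPoly ϖ r (n + 1) s := by
    simp only [genPoly]
    rw [mul_mul_mul_comm, ← pow_add, ← C_mul, ← pow_add,
        mul_mul_mul_comm, ← pow_add, ← C_mul, ← pow_add,
        Nat.sub_add_cancel hexp, Nat.sub_add_cancel hmul, Nat.mul_add]
  rw [key]
  exact Ideal.mul_mem_left _ _ (genPoly_mem ϖ r hsle)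

lemma mul_mem_genIdeal {n : ℕ} {F G : Polynomial O} (hF : F ∈ genIdeal ϖ r n)
    (hG : G ∈ genIdeal ϖ r n) : F * G ∈ genIdeal ϖ r (n + 1) := by
  have hle : genIdeal ϖ r n * genIdeal ϖ r n ≤ genIdeal ϖ r (n + 1) := by
    rw [genIdeal, Ideal.span_mul_span]
    refine Ideal.span_le.mpr ?_
    rintro x hx
    rw [Set.mem_mul] at hx
    obtain ⟨u, ⟨i, rfl⟩, v, ⟨i', rfl⟩, rfl⟩ := hx
    exact gen_mul_mem ϖ r (Nat.lt_succ_iff.mp i.isLt) (Nat.lt_succ_iff.mp i'.isLt)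
  exact hle (Ideal.mul_mem_mul hF hG)

lemma pi_mul_mem {n : ℕ} {F : Polynomial O} (hF : F ∈ genIdeal ϖ r n) :
    C (ϖ ^ (r + 1)) * F ∈ genIdeal ϖ r (n + 1) := by
  refine Submodule.span_induction ?_ ?_ ?_ ?_ hF
  · rintro x ⟨i, rfl⟩
    have : C (ϖ ^ (r + 1)) * genPoly ϖ r n i = genPoly ϖ r (n + 1) (i + 1) := by
      simp only [genPoly, Nat.succ_sub_succ]
      rw [mul_left_comm, ← C_mul, ← pow_add,
        show (r + 1) + (r + 1) * i = (r + 1) * (i + 1) by ring]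
    rw [this]
    exact genPoly_mem ϖ r (by have := i.isLt; omega)
  · simp
  · intro x y _ _ hx hy
    rw [mul_add]; exact Ideal.add_mem _ hx hy
  · intro a x _ hx
    rw [smul_eq_mul, mul_left_comm]
    exact Ideal.mul_mem_left _ _ hx

lemma comp_mem {p : ℕ} (hp : 2 ≤ p) {a : ℕ → O} {f : Polynomial O}
    (hf : f = X ^ p + ∑ i ∈ Finset.Icc 1 (p - 1), C (a i) * X ^ i)
    (ha1 : ϖ ^ (r + 1) ∣ a 1) {n : ℕ} {F : Polynomial O} (hF : F ∈ genIdeal ϖ r n) :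
    f.comp F ∈ genIdeal ϖ r (n + 1) := by
  have hsq : ∀ j, 2 ≤ j → F ^ j ∈ genIdeal ϖ r (n + 1) := by
    intro j hj
    have : F ^ j = F ^ (j - 2) * (F * F) := by
      rw [← pow_two, ← pow_add]
      congr 1
      omega
    rw [this]
    exact Ideal.mul_mem_left _ _ (mul_mem_genIdeal ϖ r hF hF)
  rw [hf]
  simp only [add_comp, pow_comp, X_comp, Polynomial.sum_comp, mul_comp, C_comp]
  refine Ideal.add_mem _ (hsq p hp) (Ideal.sum_mem _ ?_)
  intro i hi
  simp only [mem_Icc] at hi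
  rcases eq_or_lt_of_le hi.1 with h1 | h2
  · obtain ⟨b, hb⟩ := ha1
    rw [← h1, pow_one, hb, C_mul, mul_comm (C _) (C b), mul_assoc]
    exact Ideal.mul_mem_left _ _ (pi_mul_mem ϖ r hF)
  · exact Ideal.mul_mem_left _ _ (hsq i h2)

lemma f_mem {p : ℕ} (hp : 2 ≤ p) {a : ℕ → O} {f : Polynomial O}
    (hf : f = X ^ p + ∑ i ∈ Finset.Icc 1 (p - 1), C (a i) * X ^ i)
    (ha1 : ϖ ^ (r + 1) ∣ a 1) : f ∈ genIdeal ϖ r 1 := by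
  have h0 : genPoly ϖ r 1 0 = (X : Polynomial O) ^ 2 := by
    simp [genPoly]
  have h1 : genPoly ϖ r 1 1 = (X : Polynomial O) * C (ϖ ^ (r + 1)) := by
    simp [genPoly]
  rw [hf]
  refine Ideal.add_mem _ ?_ (Ideal.sum_mem _ ?_)
  · have : (X : Polynomial O) ^ p = X ^ (p - 2) * genPoly ϖ r 1 0 := by
      rw [h0, ← pow_add]
      congr 1
      omega
    rw [this]
    exact Ideal.mul_mem_left _ _ (genPoly_mem ϖ r (Nat.zero_le _))
  · intro i hi
    simp only [mem_Icc] at hi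
    rcases eq_or_lt_of_le hi.1 with he | he
    · obtain ⟨b, hb⟩ := ha1
      have : C (a i) * X ^ i = C b * genPoly ϖ r 1 1 := by
        rw [h1, ← he, pow_one, hb, C_mul]
        ring
      rw [this]
      exact Ideal.mul_mem_left _ _ (genPoly_mem ϖ r le_rfl)
    · have : C (a i) * X ^ i = (C (a i) * X ^ (i - 2)) * genPoly ϖ r 1 0 := by
        rw [h0, mul_assoc, ← pow_add]
        congr 2
        omega
      rw [this]
      exact Ideal.mul_mem_left _ _ (genPoly_mem ϖ r (Nat.zero_le _))

end Aux

/-- Lemma 2.7 of the paper.  Let `O` be a complete discrete valuation ring with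
uniformizer `ϖ` and `r ≥ 1`.  Suppose `f(u) = u^p + a_{p-1}u^{p-1} + ⋯ + a_1 u`
with `a_i ≡ 0 mod ϖ` for `1 ≤ i ≤ p-1` and `ϖ^(r+1) ∣ a_1`.  Then for every
`n ≥ 1` there exist polynomials `h_0^(n), …, h_n^(n) ∈ O[u]` such that
`f^(n)(u) = Σ_{i=0}^{n} h_{n-i}^(n)(u) · u^(2^(n-i)) · ϖ^((r+1)i)`. -/
theorem stmt_4 {O : Type*} [CommRing O] [IsDomain O] [IsDiscreteValuationRing O]
    [IsAdicComplete (IsLocalRing.maximalIdeal O) O]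
    (ϖ : O) (hϖ : Irreducible ϖ) (r : ℕ) (hr : 1 ≤ r)
    (p : ℕ) (hp : p.Prime) (a : ℕ → O)
    (f : Polynomial O)
    (hf : f = X ^ p + ∑ i ∈ Finset.Icc 1 (p - 1), C (a i) * X ^ i)
    (ha : ∀ i ∈ Finset.Icc 1 (p - 1), ϖ ∣ a i)
    (ha1 : ϖ ^ (r + 1) ∣ a 1) :
    ∀ n : ℕ, 1 ≤ n → ∃ h : ℕ → Polynomial O,
      (fun g : Polynomial O => f.comp g)^[n] X =
        ∑ i ∈ Finset.range (n + 1),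
          h (n - i) * X ^ (2 ^ (n - i)) * C (ϖ ^ ((r + 1) * i)) := by
  have hp2 : 2 ≤ p := hp.two_le
  have main : ∀ n : ℕ, 1 ≤ n →
      (fun g : Polynomial O => f.comp g)^[n] X ∈ genIdeal ϖ r n := by
    intro n hn
    induction n, hn using Nat.le_induction with
    | base =>
      simpa using f_mem ϖ r hp2 hf ha1
    | succ n hn ih =>
      rw [Function.iterate_succ_apply']
      exact comp_mem ϖ r hp2 hf ha1 ih
  intro n hn
  obtain ⟨c, hc⟩ := Submodule.mem_span_range_iff_exists_fun (Polynomial O) |>.mp (main n hn)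
  refine ⟨fun k => c ⟨n - k, by omega⟩, ?_⟩
  rw [← hc, ← Fin.sum_univ_eq_sum_range]
  refine Finset.sum_congr rfl fun i _ => ?_
  have hin : (i : ℕ) ≤ n := Nat.lt_succ_iff.mp i.isLt
  simp only [smul_eq_mul, genPoly, mul_assoc]
  congr 1
  exact (congrArg c (Fin.ext (show n - (n - (i : ℕ)) = (i : ℕ) by omega))).symm
end

section
/- Let k be a field, p a prime, and consider two monic polynomials f(x) = x^p + a_{p-1}x^{p-1} + ... + a_1 x and f'(x) = x^p + a'_{p-1}x^{p-1} + ... + a'_1 x over a complete discrete valuation ring O_F with a_i, a'_i in the maximal ideal. Suppose ξ(x) ∈ O_F[[x]] is an invertible power series (ξ(x) = μ₀x + higher order terms with μ₀ a unit) satisfying f(ξ(x)) = ξ(f'(x)). If a_s x^s and a'_{s'} x^{s'} are the lowest-degree nonzero terms of f and f' respectively, then s = s' and v(a_s) = v(a'_s), where v is the valuation on O_F. -/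
open Polynomial

lemma aux_coeff_pow_eq_zero {O : Type*} [CommRing O] {φ : PowerSeries O} {t : ℕ}
    (h : ∀ m < t, PowerSeries.coeff m φ = 0) {i N : ℕ} (hN : N < i * t) :
    PowerSeries.coeff N (φ ^ i) = 0 := by
  have hdvd : (PowerSeries.X : PowerSeries O) ^ t ∣ φ := PowerSeries.X_pow_dvd_iff.2 h
  have : (PowerSeries.X : PowerSeries O) ^ (i * t) ∣ φ ^ i := by
    rw [mul_comm, pow_mul]
    exact pow_dvd_pow_of_dvd hdvd i
  exact PowerSeries.X_pow_dvd_iff.1 this N hN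

lemma aux_coeff_pow_self {O : Type*} [CommRing O] {φ : PowerSeries O}
    (h : PowerSeries.constantCoeff φ = 0) (n : ℕ) :
    PowerSeries.coeff n (φ ^ n) = (PowerSeries.coeff 1 φ) ^ n := by
  obtain ⟨g, rfl⟩ := PowerSeries.X_dvd_iff.2 h
  rw [mul_pow, ← pow_one (PowerSeries.X : PowerSeries O)]
  rw [show PowerSeries.coeff n ((PowerSeries.X ^ 1) ^ n * g ^ n) =
      PowerSeries.coeff 0 (g ^ n) by
    rw [← pow_mul, one_mul]
    simpa using PowerSeries.coeff_X_pow_mul (g ^ n) n 0]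
  rw [show PowerSeries.coeff 1 (PowerSeries.X ^ 1 * g) = PowerSeries.coeff 0 g by
    simpa using PowerSeries.coeff_X_pow_mul g 1 0]
  simp [PowerSeries.coeff_zero_eq_constantCoeff, map_pow]

/-- Proposition 3.2 (first direction): if an invertible power series
`ξ = μ₀ x + ⋯` (with `μ₀` a unit) over a complete discrete valuation ring `O`
intertwines two monic degree-`p` polynomials `f, f'` with zero constant term and
all lower coefficients in the maximal ideal, i.e. `f(ξ(x)) = ξ(f'(x))`, and if
`a_s x^s` resp. `a'_{s'} x^{s'}` are the lowest-degree nonzero terms of `f`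
resp. `f'`, then `s = s'` and `v(a_s) = v(a'_{s'})`.
(The equation `f(ξ(x)) = ξ(f'(x))` is encoded coefficient-wise: since `f'` has
zero constant term, the coefficient of `x^N` in `ξ(f'(x))` equals that of
`Σ_{i=0}^{N} ξ_i · f'(x)^i`; the equality of valuations is encoded as equality
of `ϖ`-divisibility for all powers of the uniformizer `ϖ`.) -/
theorem stmt_6 {O : Type*} [CommRing O] [IsDomain O] [IsDiscreteValuationRing O]
    [IsAdicComplete (IsLocalRing.maximalIdeal O) O]
    (ϖ : O) (hϖ : Irreducible ϖ) (p : ℕ) (hp : p.Prime)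
    (f f' : Polynomial O)
    (hfm : f.Monic) (hfd : f.natDegree = p) (hf0 : f.coeff 0 = 0)
    (hfc : ∀ i, 1 ≤ i → i < p → ϖ ∣ f.coeff i)
    (hfm' : f'.Monic) (hfd' : f'.natDegree = p) (hf0' : f'.coeff 0 = 0)
    (hfc' : ∀ i, 1 ≤ i → i < p → ϖ ∣ f'.coeff i)
    (s s' : ℕ) (hs : 1 ≤ s) (hs' : 1 ≤ s')
    (hfs : f.coeff s ≠ 0) (hlow : ∀ i < s, f.coeff i = 0)
    (hfs' : f'.coeff s' ≠ 0) (hlow' : ∀ i < s', f'.coeff i = 0)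
    (ξ : PowerSeries O) (μ₀ : Oˣ)
    (hξ0 : PowerSeries.constantCoeff ξ = 0)
    (hξ1 : PowerSeries.coeff 1 ξ = (μ₀ : O))
    (hcomp : ∀ N : ℕ,
      PowerSeries.coeff N (Polynomial.eval₂ (PowerSeries.C) ξ f) =
        PowerSeries.coeff N (∑ i ∈ Finset.range (N + 1),
          PowerSeries.C (PowerSeries.coeff i ξ) * (f' : PowerSeries O) ^ i)) :
    s = s' ∧ ∀ n : ℕ, (ϖ ^ n ∣ f.coeff s ↔ ϖ ^ n ∣ f'.coeff s') := by
  -- order lower bound on ξ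
  have hξlow : ∀ m < 1, PowerSeries.coeff m ξ = 0 := by
    intro m hm
    interval_cases m
    simpa using hξ0
  have hξpow : ∀ {i N : ℕ}, N < i → PowerSeries.coeff N (ξ ^ i) = 0 := by
    intro i N hN
    exact aux_coeff_pow_eq_zero hξlow (by simpa using hN)
  have hf'low : ∀ m < s', PowerSeries.coeff m (f' : PowerSeries O) = 0 := by
    intro m hm
    rw [Polynomial.coeff_coe]
    exact hlow' m hm
  -- LHS coefficient formula
  have hLHS : ∀ N : ℕ, PowerSeries.coeff N (Polynomial.eval₂ (PowerSeries.C) ξ f) =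
      ∑ i ∈ Finset.range (p + 1), f.coeff i * PowerSeries.coeff N (ξ ^ i) := by
    intro N
    rw [Polynomial.eval₂_eq_sum_range, hfd, map_sum]
    refine Finset.sum_congr rfl fun i _ => ?_
    rw [PowerSeries.coeff_C_mul]
  have hssle : s ≤ p := by
    by_contra h
    push_neg at h
    exact hfs (Polynomial.coeff_eq_zero_of_natDegree_lt (hfd ▸ h))
  -- LHS vanishes below s
  have hL0 : ∀ N < s, PowerSeries.coeff N (Polynomial.eval₂ (PowerSeries.C) ξ f) = 0 := by
    intro N hN
    rw [hLHS]
    refine Finset.sum_eq_zero fun i _ => ?_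
    rcases lt_or_ge i s with hi | hi
    · rw [hlow i hi, zero_mul]
    · rw [hξpow (lt_of_lt_of_le hN hi), mul_zero]
  -- LHS at s
  have hLs : PowerSeries.coeff s (Polynomial.eval₂ (PowerSeries.C) ξ f)
      = f.coeff s * (μ₀ : O) ^ s := by
    rw [hLHS]
    rw [Finset.sum_eq_single s]
    · rw [aux_coeff_pow_self hξ0, hξ1]
    · intro i _ hi
      rcases lt_or_ge i s with h | h
      · rw [hlow i h, zero_mul]
      · rw [hξpow (lt_of_le_of_ne h (Ne.symm hi)), mul_zero]
    · intro h
      exact absurd (Finset.mem_range.2 (by omega)) h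
  -- RHS coefficient formula
  have hRHS : ∀ N : ℕ, PowerSeries.coeff N (∑ i ∈ Finset.range (N + 1),
      PowerSeries.C (PowerSeries.coeff i ξ) * (f' : PowerSeries O) ^ i)
      = ∑ i ∈ Finset.range (N + 1),
        PowerSeries.coeff i ξ * PowerSeries.coeff N ((f' : PowerSeries O) ^ i) := by
    intro N
    rw [map_sum]
    exact Finset.sum_congr rfl fun i _ => PowerSeries.coeff_C_mul _ _ _
  -- RHS vanishes below s'
  have hR0 : ∀ N < s', PowerSeries.coeff N (∑ i ∈ Finset.range (N + 1),
      PowerSeries.C (PowerSeries.coeff i ξ) * (f' : PowerSeries O) ^ i) = 0 := by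
    intro N hN
    rw [hRHS]
    refine Finset.sum_eq_zero fun i _ => ?_
    rcases Nat.eq_zero_or_pos i with rfl | hi
    · rw [PowerSeries.coeff_zero_eq_constantCoeff_apply, hξ0, zero_mul]
    · rw [aux_coeff_pow_eq_zero hf'low (lt_of_lt_of_le hN (le_mul_of_one_le_left (by omega) hi)),
        mul_zero]
  -- RHS at s'
  have hRs : PowerSeries.coeff s' (∑ i ∈ Finset.range (s' + 1),
      PowerSeries.C (PowerSeries.coeff i ξ) * (f' : PowerSeries O) ^ i)
      = (μ₀ : O) * f'.coeff s' := by
    rw [hRHS]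
    rw [Finset.sum_eq_single 1]
    · rw [pow_one, hξ1, Polynomial.coeff_coe]
    · intro i _ hi
      rcases Nat.lt_or_ge i 2 with h | h
      · interval_cases i
        · rw [PowerSeries.coeff_zero_eq_constantCoeff_apply, hξ0, zero_mul]
        · exact absurd rfl hi
      · rw [aux_coeff_pow_eq_zero hf'low (by nlinarith), mul_zero]
    · intro h
      exact absurd (Finset.mem_range.2 (by omega)) h
  have hne : f.coeff s * (μ₀ : O) ^ s ≠ 0 :=
    mul_ne_zero hfs (pow_ne_zero _ (μ₀.ne_zero))
  have hne' : (μ₀ : O) * f'.coeff s' ≠ 0 := mul_ne_zero (μ₀.ne_zero) hfs'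
  have hss : s = s' := by
    rcases lt_trichotomy s s' with h | h | h
    · have h1 := (hcomp s).trans (hR0 s h)
      rw [hLs] at h1
      exact absurd h1 hne
    · exact h
    · have := (hcomp s').trans hRs
      rw [hL0 s' h] at this
      exact absurd this.symm hne'
  subst hss
  have heq : f.coeff s * (μ₀ : O) ^ s = (μ₀ : O) * f'.coeff s := by
    rw [← hLs, ← hRs]
    exact hcomp s
  refine ⟨rfl, fun n => ?_⟩
  constructor
  · intro h
    have : ϖ ^ n ∣ f.coeff s * (μ₀ : O) ^ s := Dvd.dvd.mul_right h _
    rw [heq] at this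
    exact (IsUnit.dvd_mul_left (μ₀.isUnit)).1 this
  · intro h
    have : ϖ ^ n ∣ (μ₀ : O) * f'.coeff s := Dvd.dvd.mul_left h _
    rw [← heq] at this
    exact ((IsUnit.pow s μ₀.isUnit).dvd_mul_right).1 this
end

section
/- Let F be a field of characteristic 0, p a prime, and let f(x) = x^p + a_{p-1}x^{p-1} + ... + a_s x^s (lowest degree term a_s x^s, a_s ≠ 0, 1 ≤ s < p) and f'(x) = x^p + a'_{p-1}x^{p-1} + ... + a'_s x^s (same lowest degree s, a'_s ≠ 0) be polynomials over F. Given μ₀ ∈ F with a_s = μ₀^(1-s) a'_s (such μ₀ exists and, when s > 1, s - 1 < p so the equation is solvable), there is a unique formal power series ξ(x) ∈ F[[x]] with ξ(x) ≡ μ₀x mod x², satisfying f(ξ(x)) = ξ(f'(x)) as formal power series, provided that for s = 1 the coefficients satisfy a_1 ≠ (a'_1)^(i+1) for all i ≥ 1. -/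
/-!
Write `s = n + 1` and `ξ = ∑ ξ_j x^j`. Once `ξ ≡ μ₀ x mod x²`, the coefficient of `x^(n+m)`
(`m ≥ 2`) in `f(ξ) - ξ(f')` involves no `ξ_j` with `j > m`, and depends on `ξ_m` only through the
term `(s a_s μ₀^(s-1) - [x^(n+m)] f'^m) ξ_m`: in `f(ξ)` the variation of `ξ_m` first shows up
through `a_s ξ^s`, in `ξ(f')` through `ξ_m f'^m`. The bracket is `s a_s μ₀^(s-1) ≠ 0` when
`s > 1` (then `f'^m` starts in degree `s m > n + m`) and `a_1 - (a'_1)^m ≠ 0` when `s = 1`. So the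
equations in degrees `> s` determine `ξ_2, ξ_3, …` one at a time, while those in degrees `≤ s`
reduce to `a_s μ₀^s = μ₀ a'_s`.
-/

open Polynomial

namespace PowerSeries

variable {R : Type*}

section CommSemiring

variable [CommSemiring R]

theorem coeff_add_mul_of_X_pow_dvd {a b : ℕ} {φ ψ : R⟦X⟧} (hφ : X ^ a ∣ φ) (hψ : X ^ b ∣ ψ) :
    coeff (a + b) (φ * ψ) = coeff a φ * coeff b ψ := by
  obtain ⟨φ, rfl⟩ := hφ
  obtain ⟨ψ, rfl⟩ := hψ
  rw [mul_mul_mul_comm, ← pow_add]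
  simp [coeff_X_pow_mul']

theorem coeff_pow_eq_zero_of_X_pow_dvd {k n N : ℕ} {φ : R⟦X⟧} (hφ : X ^ k ∣ φ)
    (hN : N < k * n) : coeff N (φ ^ n) = 0 :=
  X_pow_dvd_iff.mp (pow_mul (X : R⟦X⟧) k n ▸ pow_dvd_pow_of_dvd hφ n) N hN

theorem coeff_self_pow_of_X_dvd {φ : R⟦X⟧} (hφ : X ∣ φ) (n : ℕ) :
    coeff n (φ ^ n) = coeff 1 φ ^ n := by
  induction n with
  | zero => simp
  | succ n ih =>
    rw [pow_succ, coeff_add_mul_of_X_pow_dvd (pow_dvd_pow_of_dvd hφ n) (by rwa [pow_one]), ih,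
      pow_succ]

theorem X_pow_dvd_geom_sum₂ {ξ η : R⟦X⟧} (hξ : X ∣ ξ) (hη : X ∣ η) (n : ℕ) :
    X ^ n ∣ ∑ i ∈ Finset.range (n + 1), ξ ^ i * η ^ (n - i) :=
  Finset.dvd_sum fun i hi => by
    have hin : i + (n - i) = n := by have := Finset.mem_range.mp hi; omega
    simpa only [← pow_add, hin] using
      mul_dvd_mul (pow_dvd_pow_of_dvd hξ i) (pow_dvd_pow_of_dvd hη (n - i))

theorem coeff_geom_sum₂ {ξ η : R⟦X⟧} (hξ : X ∣ ξ) (hη : X ∣ η) (h1 : coeff 1 ξ = coeff 1 η)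
    (n : ℕ) :
    coeff n (∑ i ∈ Finset.range (n + 1), ξ ^ i * η ^ (n - i)) = (n + 1) * coeff 1 ξ ^ n := by
  have hterm : ∀ i ∈ Finset.range (n + 1), coeff n (ξ ^ i * η ^ (n - i)) = coeff 1 ξ ^ n := by
    intro i hi
    have hin : i + (n - i) = n := by have := Finset.mem_range.mp hi; omega
    calc coeff n (ξ ^ i * η ^ (n - i)) = coeff (i + (n - i)) (ξ ^ i * η ^ (n - i)) := by rw [hin]
      _ = coeff 1 ξ ^ n := by
        rw [coeff_add_mul_of_X_pow_dvd (pow_dvd_pow_of_dvd hξ i) (pow_dvd_pow_of_dvd hη _),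
          coeff_self_pow_of_X_dvd hξ, coeff_self_pow_of_X_dvd hη, ← h1, ← pow_add, hin]
  rw [map_sum, Finset.sum_congr rfl hterm]
  simp

theorem constantCoeff_eval₂_C_of_X_dvd (q : R[X]) {ξ : R⟦X⟧} (hξ : X ∣ ξ) :
    constantCoeff (q.eval₂ C ξ) = q.coeff 0 := by
  rw [hom_eval₂, X_dvd_iff.mp hξ, coeff_zero_eq_eval_zero]
  simp [eval]

theorem X_pow_dvd_eval₂_C {f : R[X]} {ξ : R⟦X⟧} {s : ℕ} (hf : Polynomial.X ^ s ∣ f)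
    (hξ : X ∣ ξ) : X ^ s ∣ f.eval₂ C ξ := by
  obtain ⟨q, rfl⟩ := hf
  rw [eval₂_mul, eval₂_X_pow]
  exact dvd_mul_of_dvd_left (pow_dvd_pow_of_dvd hξ s) _

theorem coeff_eval₂_C_of_X_pow_dvd {f : R[X]} {ξ : R⟦X⟧} {s : ℕ} (hf : Polynomial.X ^ s ∣ f)
    (hξ : X ∣ ξ) : coeff s (f.eval₂ C ξ) = f.coeff s * coeff 1 ξ ^ s := by
  obtain ⟨q, rfl⟩ := hf
  have h := coeff_add_mul_of_X_pow_dvd (b := 0) (pow_dvd_pow_of_dvd hξ s) (one_dvd (q.eval₂ C ξ))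
  rw [add_zero, coeff_zero_eq_constantCoeff_apply, constantCoeff_eval₂_C_of_X_dvd q hξ,
    coeff_self_pow_of_X_dvd hξ] at h
  rw [eval₂_mul, eval₂_X_pow, h, mul_comm]
  simp [Polynomial.coeff_X_pow_mul']

theorem coeff_sum_C_coeff_mul_pow (ξ g : R⟦X⟧) (N : ℕ) :
    coeff N (∑ i ∈ Finset.range (N + 1), C (coeff i ξ) * g ^ i)
      = ∑ i ∈ Finset.range (N + 1), coeff i ξ * coeff N (g ^ i) := by
  simp only [map_sum, coeff_C_mul]

theorem coeff_sum_C_coeff_mul_pow_of_lt {ξ g : R⟦X⟧} {k N : ℕ} (hξ : X ∣ ξ) (hg : X ^ k ∣ g)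
    (hN : N < 2 * k) :
    coeff N (∑ i ∈ Finset.range (N + 1), C (coeff i ξ) * g ^ i) = coeff 1 ξ * coeff N g := by
  rw [coeff_sum_C_coeff_mul_pow, Finset.sum_eq_single 1, pow_one]
  · intro i _ hi1
    rcases Nat.lt_or_ge i 2 with hi | hi
    · obtain rfl : i = 0 := by omega
      rw [coeff_zero_eq_constantCoeff_apply, X_dvd_iff.mp hξ, zero_mul]
    · rw [coeff_pow_eq_zero_of_X_pow_dvd hg (by nlinarith), mul_zero]
  · intro h1
    rw [pow_one, X_pow_dvd_iff.mp hg N (by simp at h1; omega), mul_zero]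

end CommSemiring

section CommRing

variable [CommRing R]

theorem X_pow_dvd_sub_iff {m : ℕ} {φ ψ : R⟦X⟧} :
    X ^ m ∣ φ - ψ ↔ ∀ j < m, coeff j φ = coeff j ψ := by
  simp only [X_pow_dvd_iff, map_sub, sub_eq_zero]

theorem X_pow_two_dvd_sub_C_mul_X_iff {ξ : R⟦X⟧} {a : R} :
    X ^ 2 ∣ ξ - C a * X ↔ constantCoeff ξ = 0 ∧ coeff 1 ξ = a := by
  rw [X_pow_dvd_sub_iff, Nat.forall_lt_succ_right, Nat.forall_lt_succ_right]
  simp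

theorem coeff_eval₂_C_sub_eval₂_C {f : R[X]} {ξ η : R⟦X⟧} {m n : ℕ}
    (hf : Polynomial.X ^ (n + 1) ∣ f) (hm : 2 ≤ m) (hξ : X ∣ ξ) (h : X ^ m ∣ ξ - η) :
    coeff (n + m) (f.eval₂ C ξ) - coeff (n + m) (f.eval₂ C η)
      = (n + 1) * f.coeff (n + 1) * coeff 1 ξ ^ n * coeff m (ξ - η) := by
  have hη : X ∣ η := by
    simpa using dvd_sub hξ ((dvd_pow_self X (by omega : m ≠ 0)).trans h)
  obtain ⟨q, rfl⟩ := hf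
  set G := ∑ i ∈ Finset.range (n + 1), ξ ^ i * η ^ (n - i)
  have hG : ξ ^ (n + 1) - η ^ (n + 1) = G * (ξ - η) := by
    simpa using (geom_sum₂_mul ξ η (n + 1)).symm
  have hsplit : (Polynomial.X ^ (n + 1) * q).eval₂ C ξ - (Polynomial.X ^ (n + 1) * q).eval₂ C η
      = G * (ξ - η) * q.eval₂ C ξ + η ^ (n + 1) * (q.eval₂ C ξ - q.eval₂ C η) := by
    simp only [eval₂_mul, eval₂_X_pow]
    linear_combination q.eval₂ C ξ * hG
  have hq : ξ - η ∣ q.eval₂ C ξ - q.eval₂ C η := by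
    simpa only [eval₂_eq_eval_map] using sub_dvd_eval_sub ξ η (q.map C)
  have hmain :
      coeff (n + m) (G * (ξ - η) * q.eval₂ C ξ) = coeff n G * coeff m (ξ - η) * q.coeff 0 := by
    have hGdvd := mul_dvd_mul (X_pow_dvd_geom_sum₂ hξ hη n) h
    rw [← pow_add] at hGdvd
    rw [← add_zero (n + m), coeff_add_mul_of_X_pow_dvd hGdvd (one_dvd _),
      coeff_add_mul_of_X_pow_dvd (X_pow_dvd_geom_sum₂ hξ hη n) h,
      coeff_zero_eq_constantCoeff_apply, constantCoeff_eval₂_C_of_X_dvd q hξ]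
  have hrest : coeff (n + m) (η ^ (n + 1) * (q.eval₂ C ξ - q.eval₂ C η)) = 0 := by
    refine X_pow_dvd_iff.mp ?_ (n + m) (by omega : n + m < n + 1 + m)
    rw [pow_add]
    exact mul_dvd_mul (pow_dvd_pow_of_dvd hη _) (h.trans hq)
  rw [← map_sub, hsplit, map_add, hmain, hrest, add_zero,
    coeff_geom_sum₂ hξ hη (X_pow_dvd_sub_iff.mp h 1 (by omega)) n]
  simp only [Polynomial.coeff_X_pow_mul', le_refl, if_true, Nat.sub_self]
  ring

theorem coeff_sum_C_coeff_mul_pow_sub {ξ η g : R⟦X⟧} {m n : ℕ} (hg : X ^ (n + 1) ∣ g)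
    (h : X ^ m ∣ ξ - η) :
    coeff (n + m) (∑ i ∈ Finset.range (n + m + 1), C (coeff i ξ) * g ^ i)
      - coeff (n + m) (∑ i ∈ Finset.range (n + m + 1), C (coeff i η) * g ^ i)
      = coeff m (ξ - η) * coeff (n + m) (g ^ m) := by
  simp only [coeff_sum_C_coeff_mul_pow, ← Finset.sum_sub_distrib, ← sub_mul, ← map_sub]
  refine Finset.sum_eq_single m (fun i _ him => ?_)
    (fun hm => absurd (Finset.mem_range.mpr (by omega)) hm)
  rcases Nat.lt_or_gt_of_ne him with hi | hi
  · rw [X_pow_dvd_iff.mp h i hi, zero_mul]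
  · rw [coeff_pow_eq_zero_of_X_pow_dvd hg (by nlinarith), mul_zero]

/-- The `N`-th coefficient of `f(ξ) - ξ(g)`: as `X ∣ g`, the terms `ξ_i g^i` of `ξ(g)` with `i > N`
do not contribute to it. -/
noncomputable def semiconjDefect (f : R[X]) (g ξ : R⟦X⟧) (N : ℕ) : R :=
  coeff N (f.eval₂ C ξ) - coeff N (∑ i ∈ Finset.range (N + 1), C (coeff i ξ) * g ^ i)

section semiconjDefect

variable {f : R[X]} {g ξ : R⟦X⟧} {n : ℕ}

theorem semiconjDefect_eq_zero_of_le (hf : Polynomial.X ^ (n + 1) ∣ f) (hg : X ^ (n + 1) ∣ g)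
    (hξ : X ∣ ξ) (hrel : f.coeff (n + 1) * coeff 1 ξ ^ (n + 1) = coeff 1 ξ * coeff (n + 1) g)
    {N : ℕ} (hN : N ≤ n + 1) : semiconjDefect f g ξ N = 0 := by
  rw [semiconjDefect, coeff_sum_C_coeff_mul_pow_of_lt hξ hg (by omega)]
  rcases hN.lt_or_eq with hN | rfl
  · rw [X_pow_dvd_iff.mp (X_pow_dvd_eval₂_C hf hξ) N hN, X_pow_dvd_iff.mp hg N hN, mul_zero,
      sub_zero]
  · rw [coeff_eval₂_C_of_X_pow_dvd hf hξ, hrel, sub_self]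

theorem forall_semiconjDefect_eq_zero_iff (hf : Polynomial.X ^ (n + 1) ∣ f)
    (hg : X ^ (n + 1) ∣ g) (hξ : X ∣ ξ)
    (hrel : f.coeff (n + 1) * coeff 1 ξ ^ (n + 1) = coeff 1 ξ * coeff (n + 1) g) :
    (∀ N, semiconjDefect f g ξ N = 0) ↔ ∀ m ≥ 2, semiconjDefect f g ξ (n + m) = 0 := by
  refine ⟨fun h m _ => h (n + m), fun h N => ?_⟩
  rcases Nat.lt_or_ge (n + 1) N with hN | hN
  · simpa [show n + (N - n) = N by omega] using h (N - n) (by omega)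
  · exact semiconjDefect_eq_zero_of_le hf hg hξ hrel hN

theorem semiconjDefect_sub_semiconjDefect {η : R⟦X⟧} {m : ℕ} (hf : Polynomial.X ^ (n + 1) ∣ f)
    (hg : X ^ (n + 1) ∣ g) (hm : 2 ≤ m) (hξ : X ∣ ξ) (h : X ^ m ∣ ξ - η) :
    semiconjDefect f g ξ (n + m) - semiconjDefect f g η (n + m)
      = ((n + 1) * f.coeff (n + 1) * coeff 1 ξ ^ n - coeff (n + m) (g ^ m)) * coeff m (ξ - η) := by
  rw [semiconjDefect, semiconjDefect, sub_sub_sub_comm, coeff_eval₂_C_sub_eval₂_C hf hm hξ h,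
    coeff_sum_C_coeff_mul_pow_sub hg h]
  ring

end semiconjDefect

end CommRing

section Triangular

variable [Field R] (E : ℕ → R⟦X⟧ → R) (c : ℕ → R) (k : ℕ) (ξ₀ : R⟦X⟧)

/-- The value of `ξ_m` that makes `E m ξ = 0` when, for fixed lower coefficients, `E m` is affine
in `ξ_m` with slope `c m` (the hypothesis of `existsUnique_of_triangular`). -/
noncomputable def triangularSolution (m : ℕ) : R :=
  if m < k then coeff m ξ₀
  else -E m (mk fun j => if _ : j < m then triangularSolution j else 0) / c m
termination_by m

theorem existsUnique_of_triangular (hc : ∀ m ≥ k, c m ≠ 0)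
    (hE : ∀ m ≥ k, ∀ ξ η : R⟦X⟧, X ^ k ∣ ξ - ξ₀ → X ^ m ∣ ξ - η →
      E m ξ - E m η = c m * coeff m (ξ - η)) :
    ∃! ξ : R⟦X⟧, X ^ k ∣ ξ - ξ₀ ∧ ∀ m ≥ k, E m ξ = 0 := by
  set ξ := mk (triangularSolution E c k ξ₀)
  have hinit : X ^ k ∣ ξ - ξ₀ := X_pow_dvd_sub_iff.mpr fun j hj => by
    rw [coeff_mk, triangularSolution, if_pos hj]
  have hsol : ∀ m ≥ k, E m ξ = 0 := by
    intro m hm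
    set τ : R⟦X⟧ := mk fun j => if _ : j < m then triangularSolution E c k ξ₀ j else 0
    have hτ : X ^ m ∣ ξ - τ := X_pow_dvd_sub_iff.mpr fun j hj => by simp [ξ, τ, hj]
    have hξm : coeff m (ξ - τ) = -E m τ / c m := by
      rw [map_sub, coeff_mk, triangularSolution, if_neg (by omega)]
      simp [τ]
    have hstep := hE m hm ξ τ hinit hτ
    rw [hξm, mul_div_cancel₀ _ (hc m hm)] at hstep
    linear_combination hstep
  refine ⟨ξ, ⟨hinit, hsol⟩, fun η ⟨hη, hηE⟩ => ?_⟩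
  ext n
  induction n using Nat.strong_induction_on with
  | _ n ih =>
    rcases Nat.lt_or_ge n k with hn | hn
    · rw [X_pow_dvd_sub_iff.mp hη n hn, X_pow_dvd_sub_iff.mp hinit n hn]
    · have hstep := hE n hn η ξ hη (X_pow_dvd_sub_iff.mpr ih)
      rw [hηE n hn, hsol n hn, sub_self, eq_comm, mul_eq_zero, map_sub, sub_eq_zero] at hstep
      exact hstep.resolve_left (hc n hn)

end Triangular

end PowerSeries

open PowerSeries

theorem stmt_7_general {F : Type*} [Field F] [CharZero F]
    (f f' : Polynomial F)
    (s : ℕ) (hs : 1 ≤ s)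
    (hfs : f.coeff s ≠ 0) (hlow : ∀ i < s, f.coeff i = 0)
    (hlow' : ∀ i < s, f'.coeff i = 0)
    (μ₀ : F) (hμ₀ : μ₀ ≠ 0)
    (hrel : μ₀ ^ (s - 1) * f.coeff s = f'.coeff s)
    (hside : s = 1 → ∀ i : ℕ, 1 ≤ i → f.coeff 1 ≠ (f'.coeff 1) ^ (i + 1)) :
    ∃! ξ : PowerSeries F,
      PowerSeries.constantCoeff ξ = 0 ∧
      PowerSeries.coeff 1 ξ = μ₀ ∧
      ∀ N : ℕ,
        PowerSeries.coeff N (Polynomial.eval₂ (PowerSeries.C (R := F)) ξ f) =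
          PowerSeries.coeff N (∑ i ∈ Finset.range (N + 1),
            PowerSeries.C (PowerSeries.coeff i ξ) * (f' : PowerSeries F) ^ i) := by
  obtain ⟨n, rfl⟩ : ∃ n, s = n + 1 := ⟨s - 1, by omega⟩
  rw [Nat.add_sub_cancel] at hrel
  have hf : Polynomial.X ^ (n + 1) ∣ f := Polynomial.X_pow_dvd_iff.mpr hlow
  have hg : PowerSeries.X ^ (n + 1) ∣ (f' : F⟦X⟧) :=
    X_pow_dvd_iff.mpr fun i hi => by simpa using hlow' i hi
  have hc : ∀ m ≥ 2, (n + 1) * f.coeff (n + 1) * μ₀ ^ n - coeff (n + m) ((f' : F⟦X⟧) ^ m) ≠ 0 := by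
    intro m hm
    rcases n with _ | n
    · have hne := hside rfl (m - 1) (by omega)
      rw [Nat.sub_add_cancel (by omega)] at hne
      simpa [coeff_self_pow_of_X_dvd (by simpa using hg), sub_eq_zero] using hne
    · rw [coeff_pow_eq_zero_of_X_pow_dvd hg (by nlinarith), sub_zero]
      exact mul_ne_zero (mul_ne_zero (Nat.cast_add_one_ne_zero _) hfs) (pow_ne_zero _ hμ₀)
  refine (existsUnique_congr fun ξ => ?_).mpr
    (existsUnique_of_triangular (fun m ξ => semiconjDefect f f' ξ (n + m)) _ 2
      (PowerSeries.C μ₀ * PowerSeries.X) hc ?_)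
  · rw [X_pow_two_dvd_sub_C_mul_X_iff, and_assoc]
    refine and_congr_right fun h0 => and_congr_right fun h1 => ?_
    rw [← forall_semiconjDefect_eq_zero_iff hf hg (X_dvd_iff.mpr h0)
      (by rw [h1, Polynomial.coeff_coe]; linear_combination μ₀ * hrel)]
    simp only [semiconjDefect, sub_eq_zero]
  · intro m hm ξ η hξ h
    obtain ⟨hξ0, hξ1⟩ := X_pow_two_dvd_sub_C_mul_X_iff.mp hξ
    rw [← hξ1]
    exact semiconjDefect_sub_semiconjDefect hf hg hm (X_dvd_iff.mpr hξ0) h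

/-- Proposition 3.2 (converse direction): over a field `F` of characteristic 0,
given monic degree-`p` polynomials `f, f'` whose lowest-degree nonzero terms are
`a_s x^s` and `a'_s x^s` (same `s`, `1 ≤ s < p`), and `μ₀ ≠ 0` with
`a_s = μ₀^(1-s) a'_s` (i.e. `μ₀^(s-1)·a_s = a'_s`), and assuming in the case
`s = 1` that `a_1 ≠ (a'_1)^(i+1)` for all `i ≥ 1`, there is a *unique* formal
power series `ξ ∈ F[[x]]` with `ξ ≡ μ₀ x mod x²` satisfying `f(ξ(x)) = ξ(f'(x))`
(the composition equation being encoded coefficient-wise as in the paper, using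
that `f'` has zero constant term). -/
theorem stmt_7 {F : Type*} [Field F] [CharZero F]
    (p : ℕ) (hp : p.Prime)
    (f f' : Polynomial F)
    (hfm : f.Monic) (hfd : f.natDegree = p)
    (hfm' : f'.Monic) (hfd' : f'.natDegree = p)
    (s : ℕ) (hs : 1 ≤ s) (hsp : s < p)
    (hfs : f.coeff s ≠ 0) (hlow : ∀ i < s, f.coeff i = 0)
    (hfs' : f'.coeff s ≠ 0) (hlow' : ∀ i < s, f'.coeff i = 0)
    (μ₀ : F) (hμ₀ : μ₀ ≠ 0)
    (hrel : μ₀ ^ (s - 1) * f.coeff s = f'.coeff s)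
    (hside : s = 1 → ∀ i : ℕ, 1 ≤ i → f.coeff 1 ≠ (f'.coeff 1) ^ (i + 1)) :
    ∃! ξ : PowerSeries F,
      PowerSeries.constantCoeff ξ = 0 ∧
      PowerSeries.coeff 1 ξ = μ₀ ∧
      ∀ N : ℕ,
        PowerSeries.coeff N (Polynomial.eval₂ (PowerSeries.C (R := F)) ξ f) =
          PowerSeries.coeff N (∑ i ∈ Finset.range (N + 1),
            PowerSeries.C (PowerSeries.coeff i ξ) * (f' : PowerSeries F) ^ i) :=
  stmt_7_general f f' s hs hfs hlow hlow' μ₀ hμ₀ hrel hside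
end

section
/- Let O be a complete discrete valuation ring with algebraically closed (or just fixed) fraction field embedding, and let A(u) be a monic polynomial over the fraction field all of whose roots lie in the maximal ideal (have positive valuation), with A(0) ≠ 0. Let f(u) ∈ O[u] be monic of degree p with f(u) ≡ u^p mod ϖ and f(0) = 0. If A(u)·E(u)^m = A^φ(f(u)) for some monic polynomial E(u) with all roots of positive valuation and some m ≥ 0, where A^φ denotes applying a valuation-preserving field automorphism φ to the coefficients of A, then A is constant (A = 1). -/
open Polynomial

/-!
Pick a root `x₀` of `A` of smallest `v` (i.e. of maximal additive valuation); it is nonzero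
since `A(0) ≠ 0`. Evaluating `A · E^m = A^φ ∘ f` at `x₀` shows that `f(x₀)` is a root of `A^φ`,
so `φ⁻¹(f(x₀))` is a root of `A` with the same valuation as `f(x₀)`. But `f ≡ u^p mod 𝔪` with
`p ≥ 2` and `f(0) = 0` forces `v(f(x₀)) < v(x₀)`, contradicting the choice of `x₀`.
-/

theorem Valuation.map_coeff_mul_pow_lt {R Γ₀ : Type*} [CommRing R]
    [LinearOrderedCommGroupWithZero Γ₀] (v : Valuation R Γ₀) {f : R[X]} {x : R}
    (hx₀ : v x ≠ 0) (hx₁ : v x < 1) (h0 : f.coeff 0 = 0) (h1 : v (f.coeff 1) < 1)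
    (hle : ∀ i, v (f.coeff i) ≤ 1) (i : ℕ) : v (f.coeff i * x ^ i) < v x := by
  have hpos : 0 < v x := zero_lt_iff.mpr hx₀
  rw [v.map_mul, v.map_pow]
  match i with
  | 0 => simpa [h0] using hpos
  | 1 => simpa using mul_lt_of_lt_one_left hpos h1
  | i + 2 =>
    calc v (f.coeff (i + 2)) * v x ^ (i + 2) ≤ v x ^ (i + 2) :=
          mul_le_of_le_one_left zero_le (hle _)
      _ < v x := pow_lt_self_of_lt_one₀ hpos hx₁ (by omega)

theorem Valuation.map_eval_lt {R Γ₀ : Type*} [CommRing R]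
    [LinearOrderedCommGroupWithZero Γ₀] (v : Valuation R Γ₀) {f : R[X]} {x : R}
    (hx₀ : v x ≠ 0) (hx₁ : v x < 1) (h0 : f.coeff 0 = 0) (h1 : v (f.coeff 1) < 1)
    (hle : ∀ i, v (f.coeff i) ≤ 1) : v (f.eval x) < v x := by
  rw [eval_eq_sum_range]
  exact v.map_sum_lt hx₀ fun i _ ↦ v.map_coeff_mul_pow_lt hx₀ hx₁ h0 h1 hle i

theorem Valuation.map_coeff_le_one_of_monic {R Γ₀ : Type*} [CommRing R]
    [LinearOrderedCommGroupWithZero Γ₀] (v : Valuation R Γ₀) {f : R[X]} (hfm : f.Monic)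
    (hf0 : v (f.coeff 0) ≤ 1) (hfc : ∀ i, 1 ≤ i → i < f.natDegree → v (f.coeff i) < 1)
    (i : ℕ) : v (f.coeff i) ≤ 1 := by
  rcases lt_trichotomy i f.natDegree with hi | rfl | hi
  · rcases Nat.eq_zero_or_pos i with rfl | hi₀
    · exact hf0
    · exact (hfc i hi₀ hi).le
  · simp [hfm.coeff_natDegree]
  · simp [coeff_eq_zero_of_natDegree_lt hi]

theorem Polynomial.eval_map_ringEquiv {R S : Type*} [CommSemiring R] [CommSemiring S]
    (φ : R ≃+* S) (A : R[X]) (y : S) :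
    (A.map (φ : R →+* S)).eval y = φ (A.eval (φ.symm y)) := by
  conv_lhs => rw [← φ.apply_symm_apply y]
  rw [eval_map, ← RingEquiv.coe_toRingHom, eval₂_hom]

theorem Polynomial.exists_root_forall_le {R Γ₀ : Type*} [CommRing R] [IsDomain R]
    [LinearOrderedCommGroupWithZero Γ₀] (v : Valuation R Γ₀) {A : R[X]} (hA : A ≠ 0)
    {x : R} (hx : A.IsRoot x) : ∃ x₀, A.IsRoot x₀ ∧ ∀ y, A.IsRoot y → v x₀ ≤ v y := by
  classical
  obtain ⟨x₀, hx₀, hmin⟩ := A.roots.toFinset.exists_min_image v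
    ⟨x, by simpa [hA] using hx⟩
  exact ⟨x₀, by simpa [hA] using hx₀, fun y hy ↦ hmin y (by simpa [hA] using hy)⟩

theorem stmt_9_general {K : Type*} [Field K] [IsAlgClosed K] {Γ₀ : Type*}
    [LinearOrderedCommGroupWithZero Γ₀] (v : Valuation K Γ₀)
    (p : ℕ) (hp : p.Prime)
    (A : Polynomial K) (hAm : A.Monic)
    (hAroots : ∀ x : K, A.eval x = 0 → v x < 1)
    (hA0 : A.eval 0 ≠ 0)
    (f : Polynomial K) (hfm : f.Monic) (hfd : f.natDegree = p)
    (hf0 : f.coeff 0 = 0)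
    (hfc : ∀ i, 1 ≤ i → i < p → v (f.coeff i) < 1)
    (E : Polynomial K)
    (m : ℕ)
    (φ : K ≃+* K) (hφ : ∀ x : K, v (φ x) = v x)
    (heq : A * E ^ m = (A.map (φ : K →+* K)).comp f) :
    A = 1 := by
  by_contra hA1
  obtain ⟨x, hx⟩ := IsAlgClosed.exists_root A fun h ↦
    hA1 (hAm.natDegree_eq_zero.mp (natDegree_eq_of_degree_eq_some h))
  obtain ⟨x₀, hx₀, hmin⟩ := exists_root_forall_le v hAm.ne_zero hx
  have hvx₀ : v x₀ ≠ 0 := by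
    rw [ne_eq, v.zero_iff]
    rintro rfl
    exact hA0 hx₀
  have hroot : A.IsRoot (φ.symm (f.eval x₀)) := by
    have := congrArg (eval x₀) heq
    rw [eval_mul, hx₀.eq_zero, zero_mul, eval_comp, eval_map_ringEquiv] at this
    exact (map_eq_zero_iff φ φ.injective).mp this.symm
  have hlt : v (f.eval x₀) < v x₀ := by
    refine v.map_eval_lt hvx₀ (hAroots x₀ hx₀) hf0 (hfc 1 le_rfl ?_) ?_
    · exact hfd ▸ hp.one_lt
    · exact v.map_coeff_le_one_of_monic hfm (by simp [hf0]) (hfd ▸ hfc)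
  have hle := hmin _ hroot
  rw [← hφ (φ.symm _), RingEquiv.apply_symm_apply] at hle
  exact hle.not_gt hlt

/-- Heart of the proof of Proposition 3.7: let `K` be an algebraically closed
field with a valuation `v` (multiplicative notation: "positive valuation" means
`v < 1`).  Let `A` be a monic polynomial all of whose roots have positive
valuation, with `A(0) ≠ 0`; let `f` be monic of degree `p` with `f(0) = 0` and
`f ≡ u^p mod 𝔪` (all coefficients `a_i`, `1 ≤ i < p`, of positive valuation);
let `E` be monic with all roots of positive valuation; and let `φ` be a
valuation-preserving field automorphism of `K`.  If
`A(u)·E(u)^m = A^φ(f(u))` then `A = 1`. -/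
theorem stmt_9 {K : Type*} [Field K] [IsAlgClosed K] {Γ₀ : Type*}
    [LinearOrderedCommGroupWithZero Γ₀] (v : Valuation K Γ₀)
    (p : ℕ) (hp : p.Prime)
    (A : Polynomial K) (hAm : A.Monic)
    (hAroots : ∀ x : K, A.eval x = 0 → v x < 1)
    (hA0 : A.eval 0 ≠ 0)
    (f : Polynomial K) (hfm : f.Monic) (hfd : f.natDegree = p)
    (hf0 : f.coeff 0 = 0)
    (hfc : ∀ i, 1 ≤ i → i < p → v (f.coeff i) < 1)
    (E : Polynomial K) (hEm : E.Monic)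
    (hEroots : ∀ x : K, E.eval x = 0 → v x < 1)
    (m : ℕ)
    (φ : K ≃+* K) (hφ : ∀ x : K, v (φ x) = v x)
    (heq : A * E ^ m = (A.map (φ : K →+* K)).comp f) :
    A = 1 :=
  stmt_9_general v p hp A hAm hAroots hA0 f hfm hfd hf0 hfc E m φ hφ heq
end

section
/- Let R be a perfect valuation ring of characteristic p with valuation v_R, and let φ denote the p-power Frobenius on d×d matrices over R (applied entrywise). Suppose Z̄, Ā, C̄ are d×d matrices over R with all entries of Z̄ of positive valuation, satisfying Z̄ = Ā·φ(Z̄)·C̄, where Ā and C̄ have entries of nonnegative valuation. Then Z̄ = 0. -/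
/-!
Let `M` be the largest valuation of an entry of `Z`, so `M < 1`. Every entry of `A φ(Z) C`
has valuation at most `1 · M ^ p · 1`, hence `M ≤ M ^ p`. Since `M ^ p < M` whenever
`0 < M < 1`, this forces `M = 0`, i.e. `Z = 0`.
-/

theorem eq_zero_of_le_pow_of_lt_one {Γ₀ : Type*} [LinearOrderedCommGroupWithZero Γ₀]
    {a : Γ₀} {n : ℕ} (ha : a < 1) (hn : 1 < n) (hle : a ≤ a ^ n) : a = 0 := by
  by_contra h
  exact (pow_lt_self_of_lt_one₀ (zero_lt_iff.mpr h) ha hn).not_ge hle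

section Valuation

variable {R Γ₀ : Type*} [LinearOrderedCommGroupWithZero Γ₀]

theorem Valuation.map_frobenius [CommRing R] (v : Valuation R Γ₀) (p : ℕ) [ExpChar R p]
    (x : R) : v (frobenius R p x) = v x ^ p := by
  rw [frobenius_def, v.map_pow]

theorem Matrix.valuation_mul_apply_le [Ring R] (v : Valuation R Γ₀) {l m n : Type*} [Fintype m]
    {A : Matrix l m R} {B : Matrix m n R} {a b : Γ₀} (hA : ∀ i j, v (A i j) ≤ a)
    (hB : ∀ i j, v (B i j) ≤ b) (i : l) (j : n) : v ((A * B) i j) ≤ a * b :=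
  v.map_sum_le fun k _ => (v.map_mul _ _).trans_le (mul_le_mul' (hA i k) (hB k j))

end Valuation

theorem stmt_12_general {R : Type*} [CommRing R] (p : ℕ) [Fact p.Prime]
    [ExpChar R p]
    {Γ₀ : Type*} [LinearOrderedCommGroupWithZero Γ₀] (v : Valuation R Γ₀)
    (hv : ∀ x : R, v x = 0 ↔ x = 0)
    {d : ℕ} (Z A C : Matrix (Fin d) (Fin d) R)
    (hZ : ∀ i j, v (Z i j) < 1)
    (hA : ∀ i j, v (A i j) ≤ 1) (hC : ∀ i j, v (C i j) ≤ 1)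
    (heq : Z = A * Z.map (frobenius R p) * C) :
    Z = 0 := by
  set M := (Finset.univ : Finset (Fin d × Fin d)).sup fun ij => v (Z ij.1 ij.2)
  have hZM : ∀ i j, v (Z i j) ≤ M := fun i j =>
    Finset.le_sup (f := fun ij : Fin d × Fin d => v (Z ij.1 ij.2)) (Finset.mem_univ (i, j))
  have hbot : (⊥ : Γ₀) < 1 := bot_eq_zero (α := Γ₀) ▸ zero_lt_one
  have hM : M < 1 := (Finset.sup_lt_iff hbot).mpr fun ij _ => hZ ij.1 ij.2
  have hφZ : ∀ i j, v (Z.map (frobenius R p) i j) ≤ M ^ p := fun i j => by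
    rw [Matrix.map_apply, v.map_frobenius]
    exact pow_le_pow_left' (hZM i j) p
  have hMp : M ≤ M ^ p := Finset.sup_le fun ij _ => by
    simpa [← heq] using Matrix.valuation_mul_apply_le v
      (Matrix.valuation_mul_apply_le v hA hφZ) hC ij.1 ij.2
  have hM0 : M = 0 := eq_zero_of_le_pow_of_lt_one hM (Fact.out : p.Prime).one_lt hMp
  ext i j
  exact (hv _).mp (le_zero_iff.mp (hM0 ▸ hZM i j))

/-- Uniqueness argument in Lemma 5.2: let `R` be a perfect valuation ring (a
domain with a faithful valuation `v`) of characteristic `p`, and let `φ` be the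
entrywise `p`-power Frobenius on matrices.  If `Z̄, Ā, C̄` are `d×d` matrices
over `R` with all entries of `Z̄` of positive valuation (`v < 1`
multiplicatively), all entries of `Ā, C̄` of nonnegative valuation (`v ≤ 1`),
and `Z̄ = Ā·φ(Z̄)·C̄`, then `Z̄ = 0`. -/
theorem stmt_12 {R : Type*} [CommRing R] [IsDomain R] (p : ℕ) [Fact p.Prime]
    [CharP R p] [PerfectRing R p] [ExpChar R p]
    {Γ₀ : Type*} [LinearOrderedCommGroupWithZero Γ₀] (v : Valuation R Γ₀)
    (hv : ∀ x : R, v x = 0 ↔ x = 0)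
    {d : ℕ} (Z A C : Matrix (Fin d) (Fin d) R)
    (hZ : ∀ i j, v (Z i j) < 1)
    (hA : ∀ i j, v (A i j) ≤ 1) (hC : ∀ i j, v (C i j) ≤ 1)
    (heq : Z = A * Z.map (frobenius R p) * C) :
    Z = 0 :=
  stmt_12_general p v hv Z A C hZ hA hC heq
end
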